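/- arXiv:1803.06081 — 3 statements merged into one kernel-verified Lean document; each statement's English description precedes it below -/
import Mathlib

section
/- Let φ₁ have Bloch vector (x₁,y₁,z₁) and ψ be a pure state with Bloch vector (x,y,z) satisfying 1 − z₁z ≠ 0. Then the normalized output of the postselected circuit (CNOT, 1) on φ₁ ⊗ ψ, namely (I⊗⟨1|)CNOT(φ₁⊗ψ)CNOT†(I⊗|1⟩) divided by its trace, has Bloch vector (x₂,y₂,z₂) with x₂ = (x₁x + y₁y)/(1 − z₁z), y₂ = (y₁x − x₁y)/(1 − z₁z), z₂ = (z₁ − z)/(1 − z₁z). -/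
open Matrix Complex
open scoped Kronecker ComplexOrder

noncomputable def PX : Matrix (Fin 2) (Fin 2) ℂ := !![0, 1; 1, 0]
noncomputable def PY : Matrix (Fin 2) (Fin 2) ℂ := !![0, -Complex.I; Complex.I, 0]
noncomputable def PZ : Matrix (Fin 2) (Fin 2) ℂ := !![1, 0; 0, -1]

/-- Bloch-vector parameterization of a single-qubit state. -/
noncomputable def qubit (x y z : ℝ) : Matrix (Fin 2) (Fin 2) ℂ :=
  ((1 : ℂ)/2) • ((1 : Matrix (Fin 2) (Fin 2) ℂ) + (x : ℂ) • PX + (y : ℂ) • PY + (z : ℂ) • PZ)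

/-- The controlled-NOT unitary, control on the first qubit:
`CNOT |c,t⟩ = |c, c+t⟩`. -/
noncomputable def CNOT : Matrix (Fin 2 × Fin 2) (Fin 2 × Fin 2) ℂ :=
  Matrix.of fun p q => if p.1 = q.1 ∧ p.2 = q.1 + q.2 then 1 else 0

/-- `(I ⊗ ⟨b|) M (I ⊗ |b⟩)` as a 2×2 matrix. -/
noncomputable def pick (b : Fin 2) (M : Matrix (Fin 2 × Fin 2) (Fin 2 × Fin 2) ℂ) :
    Matrix (Fin 2) (Fin 2) ℂ :=
  Matrix.of fun i j => M (i, b) (j, b)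

/-- Probability of outcome `b` when measuring the second qubit of `C ρ C†`. -/
noncomputable def Q (b : Fin 2) (C ρ : Matrix (Fin 2 × Fin 2) (Fin 2 × Fin 2) ℂ) : ℂ :=
  (pick b (C * ρ * Cᴴ)).trace

/-- Normalized output of the postselected circuit `(C, b)` on `ρ`. -/
noncomputable def Phi (b : Fin 2) (C ρ : Matrix (Fin 2 × Fin 2) (Fin 2 × Fin 2) ℂ) :
    Matrix (Fin 2) (Fin 2) ℂ :=
  (Q b C ρ)⁻¹ • pick b (C * ρ * Cᴴ)

lemma qubit_eq (x y z : ℝ) :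
    qubit x y z = !![((1:ℂ)+z)/2, (x - y*Complex.I)/2; (x + y*Complex.I)/2, ((1:ℂ)-z)/2] := by
  ext i j
  fin_cases i <;> fin_cases j <;>
    simp [qubit, PX, PY, PZ, Matrix.one_apply] <;> ring

lemma pick_cnot (ρ : Matrix (Fin 2 × Fin 2) (Fin 2 × Fin 2) ℂ) :
    pick 1 (CNOT * ρ * CNOTᴴ) = Matrix.of fun i j => ρ (i, i+1) (j, j+1) := by
  ext i j
  simp only [pick, CNOT, Matrix.of_apply, Matrix.mul_apply, Matrix.conjTranspose_apply,
    Fintype.sum_prod_type, Fin.sum_univ_two]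
  fin_cases i <;> fin_cases j <;> simp [show (1:Fin 2)+1 = 0 from rfl, show (0:Fin 2)+1 = 1 from rfl]

theorem cnot_postselect_one_output (x₁ y₁ z₁ x y z : ℝ)
    (hφ : x₁ ^ 2 + y₁ ^ 2 + z₁ ^ 2 ≤ 1) (hψ : x ^ 2 + y ^ 2 + z ^ 2 = 1)
    (hz : 1 - z₁ * z ≠ 0) :
    Phi 1 CNOT (qubit x₁ y₁ z₁ ⊗ₖ qubit x y z) =
      qubit ((x₁ * x + y₁ * y) / (1 - z₁ * z))
            ((y₁ * x - x₁ * y) / (1 - z₁ * z))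
            ((z₁ - z) / (1 - z₁ * z)) := by
  have hz' : (1:ℂ) - (z₁:ℂ) * z ≠ 0 := by
    intro h
    apply hz
    have := congrArg Complex.re h
    simpa using this
  have key := pick_cnot (qubit x₁ y₁ z₁ ⊗ₖ qubit x y z)
  have hQ : Q 1 CNOT (qubit x₁ y₁ z₁ ⊗ₖ qubit x y z) = ((1:ℂ) - z₁*z)/2 := by
    rw [Q, key]
    simp [Matrix.trace, Matrix.kroneckerMap_apply, Fin.sum_univ_two, qubit_eq,
      show (1:Fin 2)+1 = 0 from rfl, show (0:Fin 2)+1 = 1 from rfl]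
    ring
  rw [Phi, hQ, key, qubit_eq]
  ext i j
  fin_cases i <;> fin_cases j <;>
    simp only [Matrix.smul_apply, Matrix.of_apply, Matrix.kroneckerMap_apply, qubit_eq,
      show (1:Fin 2)+1 = 0 from rfl, show (0:Fin 2)+1 = 1 from rfl, smul_eq_mul,
      Matrix.cons_val', Matrix.cons_val_zero, Matrix.cons_val_one, Matrix.head_cons,
      Matrix.head_fin_const, Matrix.empty_val', Matrix.cons_val_fin_one] <;>
  · rw [inv_mul_eq_div, div_eq_iff (by simpa using hz'), Complex.ofReal_div]
    push_cast
    field_simp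
    ring_nf
    try (simp only [Complex.I_sq]; ring)
end

section
/- Under the hypotheses of the recovery identity (ψ pure with Bloch z-component z, 1 − z₁z ≠ 0), the probability of a successful recovery satisfies Q₀(CNOT, φ₂ ⊗ ψ) = ((1 − z²)/4) / (1 − Q₀(CNOT, φ₁ ⊗ ψ)), where φ₂ = Φ₁(CNOT, φ₁ ⊗ ψ). -/
/-! Conjugating by CNOT and postselecting the target on `b` keeps exactly the entries
`(i, b + i)` of the two-qubit state. Postselecting `φ₁ ⊗ ψ` on `1` and recombining with `ψ`
therefore leaves the diagonal weight `tr φ₁ · ψ₀₀ ψ₁₁ = (1 - z²)/4`, which gets divided by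
`Q₁`; and `Q₁ = 1 - Q₀` because CNOT is unitary and `φ₁ ⊗ ψ` has unit trace. -/

open Matrix Complex
open scoped Kronecker ComplexOrder

lemma qubit_apply_zero_zero (x y z : ℝ) : qubit x y z 0 0 = (1 + z) / 2 := by
  simp [qubit, PX, PY, PZ]; ring

lemma qubit_apply_one_one (x y z : ℝ) : qubit x y z 1 1 = (1 - z) / 2 := by
  simp [qubit, PX, PY, PZ]; ring

lemma trace_qubit (x y z : ℝ) : (qubit x y z).trace = 1 := by
  rw [trace_fin_two, qubit_apply_zero_zero, qubit_apply_one_one]; ring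

lemma conjTranspose_CNOT_mul_CNOT : CNOTᴴ * CNOT = 1 := by
  ext ⟨a, b⟩ ⟨c, d⟩
  simp only [mul_apply, conjTranspose_apply, CNOT, of_apply, Fintype.sum_prod_type, one_apply]
  fin_cases a <;> fin_cases b <;> fin_cases c <;> fin_cases d <;> simp [Fin.sum_univ_two]

lemma pick_CNOT_conj_apply (b : Fin 2) (ρ : Matrix (Fin 2 × Fin 2) (Fin 2 × Fin 2) ℂ)
    (i j : Fin 2) : pick b (CNOT * ρ * CNOTᴴ) i j = ρ (i, b + i) (j, b + j) := by
  simp only [pick, mul_apply, conjTranspose_apply, CNOT, of_apply, Fintype.sum_prod_type]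
  fin_cases b <;> fin_cases i <;> fin_cases j <;> simp [Fin.sum_univ_two]

lemma pick_smul (b : Fin 2) (c : ℂ) (M : Matrix (Fin 2 × Fin 2) (Fin 2 × Fin 2) ℂ) :
    pick b (c • M) = c • pick b M :=
  rfl

lemma Q_smul (b : Fin 2) (C ρ : Matrix (Fin 2 × Fin 2) (Fin 2 × Fin 2) ℂ) (c : ℂ) :
    Q b C (c • ρ) = c * Q b C ρ := by
  rw [Q, Matrix.mul_smul, Matrix.smul_mul, pick_smul, trace_smul, smul_eq_mul, Q]

lemma Q_zero_add_Q_one {C : Matrix (Fin 2 × Fin 2) (Fin 2 × Fin 2) ℂ} (hC : Cᴴ * C = 1)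
    (ρ : Matrix (Fin 2 × Fin 2) (Fin 2 × Fin 2) ℂ) : Q 0 C ρ + Q 1 C ρ = ρ.trace := by
  have h : Q 0 C ρ + Q 1 C ρ = (C * ρ * Cᴴ).trace := by
    simp only [Q, pick, trace, diag, of_apply, Fintype.sum_prod_type, Fin.sum_univ_two]
    ring
  rw [h, trace_mul_cycle, hC, one_mul]

lemma Q_CNOT_kronecker (b : Fin 2) (A B : Matrix (Fin 2) (Fin 2) ℂ) :
    Q b CNOT (A ⊗ₖ B) = A 0 0 * B b b + A 1 1 * B (b + 1) (b + 1) := by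
  simp [Q, trace_fin_two, pick_CNOT_conj_apply, add_comm b 1]

theorem recovery_probability_general (x₁ y₁ z₁ x y z : ℝ) :
    Q 0 CNOT ((Phi 1 CNOT (qubit x₁ y₁ z₁ ⊗ₖ qubit x y z)) ⊗ₖ qubit x y z) =
      (((1 - z ^ 2) / 4 : ℝ) : ℂ) /
        (1 - Q 0 CNOT (qubit x₁ y₁ z₁ ⊗ₖ qubit x y z)) := by
  set ρ := qubit x₁ y₁ z₁ ⊗ₖ qubit x y z
  have hQ : 1 - Q 0 CNOT ρ = Q 1 CNOT ρ := by
    have htrace : ρ.trace = 1 := by rw [trace_kronecker, trace_qubit, trace_qubit, one_mul]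
    rw [← htrace, ← Q_zero_add_Q_one conjTranspose_CNOT_mul_CNOT ρ]
    ring
  have hnum : Q 0 CNOT (pick 1 (CNOT * ρ * CNOTᴴ) ⊗ₖ qubit x y z) = ((1 - z ^ 2) / 4 : ℝ) := by
    have h11 : (1 : Fin 2) + 1 = 0 := rfl
    simp only [Q_CNOT_kronecker, pick_CNOT_conj_apply, ρ, kroneckerMap_apply, add_zero,
      zero_add, h11, qubit_apply_zero_zero, qubit_apply_one_one]
    push_cast
    ring
  rw [Phi, smul_kronecker, Q_smul, hnum, hQ, inv_mul_eq_div]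

theorem recovery_probability (x₁ y₁ z₁ x y z : ℝ)
    (hφ : x₁ ^ 2 + y₁ ^ 2 + z₁ ^ 2 ≤ 1) (hψ : x ^ 2 + y ^ 2 + z ^ 2 = 1)
    (hz : 1 - z₁ * z ≠ 0) :
    Q 0 CNOT ((Phi 1 CNOT (qubit x₁ y₁ z₁ ⊗ₖ qubit x y z)) ⊗ₖ qubit x y z) =
      (((1 - z ^ 2) / 4 : ℝ) : ℂ) /
        (1 - Q 0 CNOT (qubit x₁ y₁ z₁ ⊗ₖ qubit x y z)) :=
  recovery_probability_general x₁ y₁ z₁ x y z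
end

section
/- With the ladder states |H_i⟩ = cos(θ_i)|0⟩ + sin(θ_i)|1⟩ where cot(θ_i) = cot^{i+1}(π/8), applying CNOT to |H_i⟩ ⊗ |H_0⟩ and postselecting outcome 0 on the second qubit yields (after normalization) the state |H_{i+1}⟩, while postselecting outcome 1 yields |H_{i−1}⟩ for i ≥ 1. -/
open Matrix Complex Real

/-- The ladder state `|H_i⟩ = cos(θ i)|0⟩ + sin(θ i)|1⟩` as a vector in ℂ². -/
noncomputable def ladder (θ : ℕ → ℝ) (i : ℕ) : Fin 2 → ℂ :=
  ![(Real.cos (θ i) : ℂ), (Real.sin (θ i) : ℂ)]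

theorem ladder_cnot (θ : ℕ → ℝ)
    (hθ : ∀ i, θ i ∈ Set.Ioo 0 (Real.pi / 2))
    (hcot : ∀ i, Real.cos (θ i) / Real.sin (θ i) =
      (Real.cos (Real.pi / 8) / Real.sin (Real.pi / 8)) ^ (i + 1)) (i : ℕ) :
    (∃ c : ℝ, 0 < c ∧
      (fun j : Fin 2 =>
        CNOT.mulVec (fun p => ladder θ i p.1 * ladder θ 0 p.2) (j, 0)) =
      fun j => (c : ℂ) • ladder θ (i + 1) j) ∧
    (1 ≤ i → ∃ c : ℝ, 0 < c ∧
      (fun j : Fin 2 =>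
        CNOT.mulVec (fun p => ladder θ i p.1 * ladder θ 0 p.2) (j, 1)) =
      fun j => (c : ℂ) • ladder θ (i - 1) j) := by
  have hpi := Real.pi_pos
  have hcos : ∀ n, 0 < Real.cos (θ n) := fun n =>
    Real.cos_pos_of_mem_Ioo ⟨by linarith [(hθ n).1], (hθ n).2⟩
  have hsin : ∀ n, 0 < Real.sin (θ n) := fun n =>
    Real.sin_pos_of_pos_of_lt_pi (hθ n).1 (by linarith [(hθ n).2])
  have hc8 : 0 < Real.cos (Real.pi / 8) :=
    Real.cos_pos_of_mem_Ioo ⟨by linarith, by linarith⟩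
  have hs8 : 0 < Real.sin (Real.pi / 8) :=
    Real.sin_pos_of_pos_of_lt_pi (by linarith) (by linarith)
  set k : ℝ := Real.cos (Real.pi / 8) / Real.sin (Real.pi / 8) with hkdef
  have hk : 0 < k := div_pos hc8 hs8
  constructor
  · -- postselect 0
    have key1 : Real.cos (θ i) * Real.cos (θ 0) * Real.sin (θ (i + 1))
        = Real.sin (θ i) * Real.sin (θ 0) * Real.cos (θ (i + 1)) := by
      have e : Real.cos (θ i) / Real.sin (θ i) * (Real.cos (θ 0) / Real.sin (θ 0))
          = Real.cos (θ (i + 1)) / Real.sin (θ (i + 1)) := by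
        rw [hcot i, hcot 0, hcot (i + 1)]; ring
      rw [div_mul_div_comm, div_eq_div_iff (mul_pos (hsin i) (hsin 0)).ne' (hsin (i + 1)).ne'] at e
      linarith
    set c : ℝ := Real.cos (θ i) * Real.cos (θ 0) / Real.cos (θ (i + 1)) with hcdef
    have r0 : Real.cos (θ i) * Real.cos (θ 0) = c * Real.cos (θ (i + 1)) :=
      (div_mul_cancel₀ _ (hcos (i + 1)).ne').symm
    have r1 : Real.sin (θ i) * Real.sin (θ 0) = c * Real.sin (θ (i + 1)) := by
      rw [hcdef, div_mul_eq_mul_div, eq_div_iff (hcos (i + 1)).ne']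
      linarith
    refine ⟨c, div_pos (mul_pos (hcos i) (hcos 0)) (hcos (i + 1)), ?_⟩
    funext j
    simp only [CNOT, Matrix.mulVec, dotProduct, Fintype.sum_prod_type,
      Fin.sum_univ_succ, ladder]
    fin_cases j
    all_goals
      simp only [Matrix.of_apply, Matrix.cons_val_zero, Matrix.cons_val_one,
        Matrix.head_cons, smul_eq_mul, Fin.sum_univ_zero]
    all_goals norm_num [Fin.ext_iff]
    all_goals try rw [if_pos (by decide)]
    all_goals try rw [if_neg (by decide), add_zero]
    · exact_mod_cast r0
    · exact_mod_cast r1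
  · -- postselect 1
    intro hi
    obtain ⟨m, rfl⟩ : ∃ m, i = m + 1 := ⟨i - 1, (Nat.succ_pred_eq_of_pos hi).symm⟩
    have hm : (m + 1) - 1 = m := rfl
    have key2 : Real.cos (θ (m + 1)) * Real.sin (θ 0) * Real.sin (θ m)
        = Real.sin (θ (m + 1)) * Real.cos (θ 0) * Real.cos (θ m) := by
      have h0 : Real.sin (θ 0) / Real.cos (θ 0) = k⁻¹ := by
        rw [← inv_div, ← pow_one k, ← hcot 0]
      have e : Real.cos (θ (m + 1)) / Real.sin (θ (m + 1)) * (Real.sin (θ 0) / Real.cos (θ 0))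
          = Real.cos (θ m) / Real.sin (θ m) := by
        rw [hcot (m + 1), hcot m, h0, pow_succ _ (m + 1), mul_assoc,
          mul_inv_cancel₀ hk.ne', mul_one]
      rw [div_mul_div_comm, div_eq_div_iff (mul_pos (hsin (m + 1)) (hcos 0)).ne' (hsin m).ne'] at e
      linarith
    set c : ℝ := Real.cos (θ (m + 1)) * Real.sin (θ 0) / Real.cos (θ m) with hcdef
    have r0 : Real.cos (θ (m + 1)) * Real.sin (θ 0) = c * Real.cos (θ m) :=
      (div_mul_cancel₀ _ (hcos m).ne').symm
    have r1 : Real.sin (θ (m + 1)) * Real.cos (θ 0) = c * Real.sin (θ m) := by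
      rw [hcdef, div_mul_eq_mul_div, eq_div_iff (hcos m).ne']
      linarith
    refine ⟨c, div_pos (mul_pos (hcos (m + 1)) (hsin 0)) (hcos m), ?_⟩
    funext j
    simp only [CNOT, Matrix.mulVec, dotProduct, Fintype.sum_prod_type,
      Fin.sum_univ_succ, ladder, hm]
    fin_cases j
    all_goals
      simp only [Matrix.of_apply, Matrix.cons_val_zero, Matrix.cons_val_one,
        Matrix.head_cons, smul_eq_mul, Fin.sum_univ_zero]
    all_goals norm_num [Fin.ext_iff]
    all_goals try rw [if_pos (by decide)]
    all_goals try rw [if_neg (by decide), add_zero]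
    · exact_mod_cast r0
    · exact_mod_cast r1
end
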